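/- arXiv:1807.03931 — 2 statements merged into one kernel-verified Lean document; each statement's English description precedes it below -/
import Mathlib

section
/- Let X and Y be random variables whose joint density factorizes as p(x, y | θ) = p(x | θ) p(y | x), where θ ∈ Ω is a parameter, the support 𝒳 of X does not depend on θ, and the conditional density p(y | x) does not depend on θ (the Markov relationship θ → X → Y). For a fixed observation y with p(y | θ) = ∫_{𝒳} p(x | θ) p(y | x) dx > 0 for all θ ∈ Ω, define the observed-data log-likelihood l(θ) = log p(y | θ), the posterior p(x | y, θ) = p(x | θ) p(y | x) / p(y | θ), and the EM auxiliary function Q(θ | θ') = ∫_{𝒳} p(x | y, θ') log p(x | θ) dx (assumed finite). Then for any θ, θ^(t) ∈ Ω, if Q(θ | θ^(t)) ≥ Q(θ^(t) | θ^(t)), then l(θ) ≥ l(θ^(t)). -/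
open MeasureTheory Real

/-! Write `q = p(· | y, θᵗ)` for the current posterior and `g = p(· | θ) / p(· | θᵗ)`. The common
support makes `g > 0` wherever `q > 0`, so `log g ≤ g - 1` gives
`Q(θ | θᵗ) - Q(θᵗ | θᵗ) = ∫ q log g ≤ ∫ q g - ∫ q = p(y | θ) / p(y | θᵗ) - 1`.
A nonnegative left side thus forces `p(y | θ) ≥ p(y | θᵗ)`. -/

lemma mul_log_le_mul_sub_one {q g : ℝ} (hq : 0 ≤ q) (hg : 0 < q → 0 < g) :
    q * log g ≤ q * (g - 1) := by
  rcases hq.eq_or_lt with rfl | hq_pos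
  · simp
  · exact mul_le_mul_of_nonneg_left (log_le_sub_one_of_pos (hg hq_pos)) hq

lemma mul_log_div_eq_sub {c a b : ℝ} (h : c ≠ 0 → a ≠ 0 ∧ b ≠ 0) :
    c * log (b / a) = c * log b - c * log a := by
  rcases eq_or_ne c 0 with rfl | hc
  · simp
  · rw [log_div (h hc).2 (h hc).1, mul_sub]

lemma mul_div_mul_div_eq {a b w Z : ℝ} (hab : a = 0 → b = 0) :
    a * w / Z * (b / a) = b * w / Z := by
  rcases eq_or_ne a 0 with rfl | ha
  · simp [hab rfl]
  · field_simp

lemma integral_mul_log_le_integral_mul_sub {X : Type*} [MeasurableSpace X] {μ : Measure X}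
    {q g : X → ℝ} (hq : ∀ x, 0 ≤ q x) (hg : ∀ x, 0 < q x → 0 < g x)
    (hq_int : Integrable q μ) (hqg_int : Integrable (fun x => q x * g x) μ)
    (hqlog_int : Integrable (fun x => q x * log (g x)) μ) :
    ∫ x, q x * log (g x) ∂μ ≤ ∫ x, q x * g x ∂μ - ∫ x, q x ∂μ := by
  rw [← integral_sub hqg_int hq_int]
  refine integral_mono hqlog_int (hqg_int.sub hq_int) fun x => ?_
  simpa only [mul_sub, mul_one] using mul_log_le_mul_sub_one (hq x) (hg x)

theorem em_monotonicity_general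
    {X : Type*} [MeasurableSpace X] (μ : Measure X)
    {Ω : Type*}
    -- `px θ x` is the density `p(x | θ)`; `py x` is `p(y | x)` for the fixed observation `y`
    (px : Ω → X → ℝ) (py : X → ℝ) (S : Set X)
    (hpx_nonneg : ∀ θ x, 0 ≤ px θ x)
    -- the support of `X` does not depend on `θ`
    (hsupport : ∀ θ x, 0 < px θ x ↔ x ∈ S)
    (hpy_nonneg : ∀ x, 0 ≤ py x)
    -- the marginal likelihood `p(y | θ) = ∫ p(x | θ) p(y | x) dx`, assumed positive
    (pY : Ω → ℝ)
    (hpY_int : ∀ θ, Integrable (fun x => px θ x * py x) μ)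
    (hpY : ∀ θ, pY θ = ∫ x, px θ x * py x ∂μ)
    (hpY_pos : ∀ θ, 0 < pY θ)
    -- the observed-data log-likelihood
    (l : Ω → ℝ) (hl : ∀ θ, l θ = Real.log (pY θ))
    -- the posterior `p(x | y, θ)`
    (post : Ω → X → ℝ)
    (hpost : ∀ θ x, post θ x = px θ x * py x / pY θ)
    -- the EM auxiliary function `Q(θ | θ')`, assumed finite
    (Q : Ω → Ω → ℝ)
    (hQ_int : ∀ θ θ', Integrable (fun x => post θ' x * Real.log (px θ x)) μ)
    (hQ : ∀ θ θ', Q θ θ' = ∫ x, post θ' x * Real.log (px θ x) ∂μ)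
    (θ θt : Ω)
    (hQmono : Q θ θt ≥ Q θt θt) :
    l θ ≥ l θt := by
  have hZ := hpY_pos θt
  have hpost_nonneg (x : X) : 0 ≤ post θt x := by
    rw [hpost]; have := hpx_nonneg θt x; have := hpy_nonneg x; positivity
  have hsame (x : X) : 0 < px θt x ↔ 0 < px θ x := (hsupport θt x).trans (hsupport θ x).symm
  have hpx_pos (x : X) (hx : post θt x ≠ 0) : 0 < px θt x ∧ 0 < px θ x := by
    have ht : 0 < px θt x := (hpx_nonneg θt x).lt_of_ne fun h => hx (by simp [hpost, ← h])
    exact ⟨ht, (hsame x).1 ht⟩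
  have hlog (x : X) : post θt x * log (px θ x / px θt x) =
      post θt x * log (px θ x) - post θt x * log (px θt x) :=
    mul_log_div_eq_sub fun hx => ⟨(hpx_pos x hx).1.ne', (hpx_pos x hx).2.ne'⟩
  have hratio (x : X) : post θt x * (px θ x / px θt x) = px θ x * py x / pY θt := by
    rw [hpost]
    refine mul_div_mul_div_eq fun h => le_antisymm ?_ (hpx_nonneg θ x)
    exact not_lt.1 fun hθ => ((hsame x).2 hθ).ne' h
  have hQ_diff : ∫ x, post θt x * log (px θ x / px θt x) ∂μ = Q θ θt - Q θt θt := by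
    simp only [hlog, hQ]; exact integral_sub (hQ_int θ θt) (hQ_int θt θt)
  have hmass : ∫ x, post θt x * (px θ x / px θt x) ∂μ = pY θ / pY θt := by
    simp only [hratio, hpY]; exact integral_div _ _
  have hnorm : ∫ x, post θt x ∂μ = 1 := by
    simp only [hpost, integral_div, ← hpY]; exact div_self hZ.ne'
  have key := integral_mul_log_le_integral_mul_sub hpost_nonneg
    (fun x hx => div_pos (hpx_pos x hx.ne').2 (hpx_pos x hx.ne').1)
    (((hpY_int θt).div_const _).congr (.of_forall fun x => (hpost θt x).symm))
    (((hpY_int θ).div_const _).congr (.of_forall fun x => (hratio x).symm))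
    (((hQ_int θ θt).sub (hQ_int θt θt)).congr (.of_forall fun x => (hlog x).symm))
  rw [hQ_diff, hmass, hnorm] at key
  rw [hl, hl, ge_iff_le]
  exact log_le_log hZ ((one_le_div hZ).1 (by linarith))

/-- **EM monotonicity (Theorem 1).** Under the Markov relationship θ → X → Y
(joint density `p(x, y | θ) = p(x | θ) p(y | x)`, with the support `S` of `X`
not depending on `θ` and `p(y | x)` not depending on `θ`), for a fixed
observation `y`, improving the EM auxiliary function `Q` never decreases the
observed-data log-likelihood `l`. -/
theorem em_monotonicity
    {X : Type*} [MeasurableSpace X] (μ : Measure X) [SigmaFinite μ]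
    {Ω : Type*}
    -- `px θ x` is the density `p(x | θ)`; `py x` is `p(y | x)` for the fixed observation `y`
    (px : Ω → X → ℝ) (py : X → ℝ) (S : Set X)
    (hpx_nonneg : ∀ θ x, 0 ≤ px θ x)
    (hpx_int : ∀ θ, Integrable (px θ) μ)
    (hpx_prob : ∀ θ, ∫ x, px θ x ∂μ = 1)
    -- the support of `X` does not depend on `θ`
    (hsupport : ∀ θ x, 0 < px θ x ↔ x ∈ S)
    (hpy_nonneg : ∀ x, 0 ≤ py x)
    -- the marginal likelihood `p(y | θ) = ∫ p(x | θ) p(y | x) dx`, assumed positive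
    (pY : Ω → ℝ)
    (hpY_int : ∀ θ, Integrable (fun x => px θ x * py x) μ)
    (hpY : ∀ θ, pY θ = ∫ x, px θ x * py x ∂μ)
    (hpY_pos : ∀ θ, 0 < pY θ)
    -- the observed-data log-likelihood
    (l : Ω → ℝ) (hl : ∀ θ, l θ = Real.log (pY θ))
    -- the posterior `p(x | y, θ)`
    (post : Ω → X → ℝ)
    (hpost : ∀ θ x, post θ x = px θ x * py x / pY θ)
    -- the EM auxiliary function `Q(θ | θ')`, assumed finite
    (Q : Ω → Ω → ℝ)
    (hQ_int : ∀ θ θ', Integrable (fun x => post θ' x * Real.log (px θ x)) μ)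
    (hQ : ∀ θ θ', Q θ θ' = ∫ x, post θ' x * Real.log (px θ x) ∂μ)
    (θ θt : Ω)
    (hQmono : Q θ θt ≥ Q θt θt) :
    l θ ≥ l θt :=
  em_monotonicity_general μ px py S hpx_nonneg hsupport hpy_nonneg pY hpY_int hpY hpY_pos l hl post
    hpost Q hQ_int hQ θ θt hQmono
end

section
/- Let M ≥ 1, let B ∈ ℝ^{M×M} be a diagonal matrix with strictly positive diagonal entries, let β_y > 0, let 𝟙 ∈ ℝ^M be the all-ones vector, let F ∈ ℝ^M, y ∈ ℝ, and set s = β_y^{-1} + 𝟙ᵀ B^{-1} 𝟙. Then ( β_y 𝟙𝟙ᵀ + B )^{-1} ( β_y y 𝟙 + B F ) = F + ( (y − 𝟙ᵀ F) / s ) · B^{-1} 𝟙. -/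
/-!
By Sherman–Morrison, for invertible `B` the system `(B + β u vᵀ) x = b` is solved by
`x = B⁻¹b - (β vᵀB⁻¹b / (1 + β vᵀB⁻¹u)) B⁻¹u` as soon as `1 + β vᵀB⁻¹u ≠ 0`; in particular
`B + β u vᵀ` is invertible. Here `1 + β_y 𝟙ᵀB⁻¹𝟙 = β_y s > 0` because `B⁻¹` is positive definite,
and for `b = β_y y 𝟙 + B F` the formula collapses to `F + ((y - 𝟙ᵀF) / s) B⁻¹𝟙`.
-/

open Matrix

namespace Matrix

variable {n K : Type*} [Fintype n] [DecidableEq n] [Field K]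
  {B : Matrix n n K} {β : K} {u v : n → K}

theorem add_smul_vecMulVec_mulVec_shermanMorrison (hB : IsUnit B)
    (hs : 1 + β * (v ⬝ᵥ B⁻¹ *ᵥ u) ≠ 0) (b : n → K) :
    (B + β • vecMulVec u v) *ᵥ
        (B⁻¹ *ᵥ b - (β * (v ⬝ᵥ B⁻¹ *ᵥ b) / (1 + β * (v ⬝ᵥ B⁻¹ *ᵥ u))) • B⁻¹ *ᵥ u) = b := by
  have hBB : ∀ w, B *ᵥ (B⁻¹ *ᵥ w) = w := fun w => by
    rw [mulVec_mulVec, mul_nonsing_inv _ ((isUnit_iff_isUnit_det B).mp hB), one_mulVec]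
  have hrankOne : ∀ w, (β • vecMulVec u v) *ᵥ w = (β * (v ⬝ᵥ w)) • u := fun w => by
    rw [smul_mulVec, vecMulVec_mulVec, op_smul_eq_smul, smul_smul]
  set c := β * (v ⬝ᵥ B⁻¹ *ᵥ b) / (1 + β * (v ⬝ᵥ B⁻¹ *ᵥ u))
  have hc : c * (1 + β * (v ⬝ᵥ B⁻¹ *ᵥ u)) = β * (v ⬝ᵥ B⁻¹ *ᵥ b) := div_mul_cancel₀ _ hs
  rw [add_mulVec, mulVec_sub, mulVec_smul, hBB, hBB, hrankOne, dotProduct_sub,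
    dotProduct_smul, smul_eq_mul]
  linear_combination (norm := module) -hc • u

theorem isUnit_add_smul_vecMulVec (hB : IsUnit B) (hs : 1 + β * (v ⬝ᵥ B⁻¹ *ᵥ u) ≠ 0) :
    IsUnit (B + β • vecMulVec u v) :=
  mulVec_surjective_iff_isUnit.mp fun b => ⟨_, add_smul_vecMulVec_mulVec_shermanMorrison hB hs b⟩

theorem inv_add_smul_vecMulVec_mulVec (hB : IsUnit B) (hs : 1 + β * (v ⬝ᵥ B⁻¹ *ᵥ u) ≠ 0)
    (b : n → K) :
    (B + β • vecMulVec u v)⁻¹ *ᵥ b =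
      B⁻¹ *ᵥ b - (β * (v ⬝ᵥ B⁻¹ *ᵥ b) / (1 + β * (v ⬝ᵥ B⁻¹ *ᵥ u))) • B⁻¹ *ᵥ u := by
  have := (isUnit_add_smul_vecMulVec hB hs).invertible
  exact inv_mulVec_eq_vec (add_smul_vecMulVec_mulVec_shermanMorrison hB hs b).symm

end Matrix

theorem hidden_target_posterior_mean_general
    {M : ℕ}
    (d : Fin M → ℝ) (hd : ∀ m, 0 < d m)
    (B : Matrix (Fin M) (Fin M) ℝ) (hB : B = Matrix.diagonal d)
    (βy : ℝ) (hβy : 0 < βy)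
    (ones : Fin M → ℝ)
    (F : Fin M → ℝ) (y : ℝ)
    (s : ℝ) (hs : s = βy⁻¹ + ones ⬝ᵥ (B⁻¹ *ᵥ ones)) :
    (βy • vecMulVec ones ones + B)⁻¹ *ᵥ ((βy * y) • ones + B *ᵥ F) =
      F + ((y - ones ⬝ᵥ F) / s) • (B⁻¹ *ᵥ ones) := by
  have hBpd : B.PosDef := hB ▸ PosDef.diagonal hd
  have hBunit : IsUnit B := hBpd.isUnit
  have hspos : 0 < s := hs ▸ add_pos_of_pos_of_nonneg (inv_pos.mpr hβy)
    (hBpd.inv.posSemidef.dotProduct_mulVec_nonneg ones)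
  have hsβ : 1 + βy * (ones ⬝ᵥ B⁻¹ *ᵥ ones) = βy * s := by
    rw [hs, mul_add, mul_inv_cancel₀ hβy.ne']
  have hBinvB : B⁻¹ *ᵥ ((βy * y) • ones + B *ᵥ F) = (βy * y) • B⁻¹ *ᵥ ones + F := by
    rw [mulVec_add, mulVec_smul, mulVec_mulVec,
      nonsing_inv_mul _ ((isUnit_iff_isUnit_det B).mp hBunit), one_mulVec]
  rw [add_comm, inv_add_smul_vecMulVec_mulVec hBunit (hsβ ▸ (mul_pos hβy hspos).ne'), hBinvB,
    hsβ, dotProduct_add, dotProduct_smul, smul_eq_mul]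
  have hcoef : βy * y - βy * (βy * y * (ones ⬝ᵥ B⁻¹ *ᵥ ones) + ones ⬝ᵥ F) / (βy * s)
      = (y - ones ⬝ᵥ F) / s := by
    field_simp
    linear_combination -y * hsβ
  linear_combination (norm := module) hcoef • (B⁻¹ *ᵥ ones)

/-- **Closed form of the posterior mean of the hidden local targets (equation
(43)).** For a diagonal matrix `B` with positive diagonal, `β_y > 0`, `𝟙` the
all-ones vector, `F ∈ ℝ^M`, `y ∈ ℝ`, and `s = β_y⁻¹ + 𝟙ᵀB⁻¹𝟙`,
`(β_y 𝟙𝟙ᵀ + B)⁻¹ (β_y y 𝟙 + B F) = F + ((y − 𝟙ᵀF)/s) B⁻¹𝟙`. -/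
theorem hidden_target_posterior_mean
    {M : ℕ} (hM : 1 ≤ M)
    (d : Fin M → ℝ) (hd : ∀ m, 0 < d m)
    (B : Matrix (Fin M) (Fin M) ℝ) (hB : B = Matrix.diagonal d)
    (βy : ℝ) (hβy : 0 < βy)
    (ones : Fin M → ℝ) (hones : ones = fun _ => 1)
    (F : Fin M → ℝ) (y : ℝ)
    (s : ℝ) (hs : s = βy⁻¹ + ones ⬝ᵥ (B⁻¹ *ᵥ ones)) :
    (βy • vecMulVec ones ones + B)⁻¹ *ᵥ ((βy * y) • ones + B *ᵥ F) =
      F + ((y - ones ⬝ᵥ F) / s) • (B⁻¹ *ᵥ ones) :=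
  hidden_target_posterior_mean_general d hd B hB βy hβy ones F y s hs
end
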